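/- Suppose 𝒜ₙ ⊆ E^∞ for each n ∈ ℕ and ℬ = ⋃ₙ 𝒜ₙ. Let x⃗ be a finite block sequence and X a block subspace. Then there is a block subspace Z ⊆ X such that either (a) II has a strategy in G_Z to play sequences (zᵢ) ∈ E^∞ for which there exists n such that for every block subspace V ⊆ Z, I has no strategy in F_V(x⃗⌢(z₀,…,zₙ)) to play in ∼𝒜ₙ, or (b) I has a strategy in F_Z(x⃗) to play in ∼ℬ. -/

import Mathlib

section Defs

variable {𝔽 : Type} [Field 𝔽] {E : Type} [AddCommGroup E] [Module 𝔽 E]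

/-- The support of a vector with respect to the basis `b`. -/
noncomputable def supp (b : Module.Basis ℕ 𝔽 E) (x : E) : Finset ℕ :=
  (b.repr x).support

/-- `VecLt b x y` means `x < y`: every element of the support of `x` is smaller than
every element of the support of `y`. -/
def VecLt (b : Module.Basis ℕ 𝔽 E) (x y : E) : Prop :=
  ∀ m ∈ supp b x, ∀ n ∈ supp b y, m < n

/-- `NatLt b k x` means `k < x`: `k` is smaller than every element of the support of `x`. -/
def NatLt (b : Module.Basis ℕ 𝔽 E) (k : ℕ) (x : E) : Prop :=
  ∀ n ∈ supp b x, k < n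

/-- An infinite block sequence: a sequence of nonzero vectors with `x n < x (n + 1)`. -/
def IsBlockSeq (b : Module.Basis ℕ 𝔽 E) (x : ℕ → E) : Prop :=
  (∀ n, x n ≠ 0) ∧ ∀ n, VecLt b (x n) (x (n + 1))

/-- A finite block sequence: a list of nonzero vectors, consecutively increasing in the
block ordering. -/
def IsFinBlockSeq (b : Module.Basis ℕ 𝔽 E) (l : List E) : Prop :=
  (∀ x ∈ l, x ≠ 0) ∧ l.Chain' (VecLt b)

/-- A block subspace: a subspace spanned by an infinite block sequence. -/
def IsBlockSubspace (b : Module.Basis ℕ 𝔽 E) (X : Submodule 𝔽 E) : Prop :=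
  ∃ y : ℕ → E, IsBlockSeq b y ∧ X = Submodule.span 𝔽 (Set.range y)

/-- The list of the first `n` values of a sequence. -/
def hist {α : Type _} (x : ℕ → α) (n : ℕ) : List α :=
  List.ofFn (fun j : Fin n => x j)

/-- The concatenation of a finite prefix with an infinite sequence. -/
def prefCat {α : Type _} (l : List α) (x : ℕ → α) : ℕ → α := fun n =>
  if h : n < l.length then l.get ⟨n, h⟩ else x (n - l.length)

/-- Player II has a strategy in Gowers' game `G_X(pre)` below `X` to play in `A`:
player I plays infinite-dimensional subspaces `Y i ≤ X`, player II answers with a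
nonzero vector of `Y i`, the vectors played by II forming a block sequence, and the
outcome (the prefix `pre` followed by II's vectors) lies in `A`. -/
def IIWinsG (b : Module.Basis ℕ 𝔽 E) (X : Submodule 𝔽 E) (pre : List E) (A : Set (ℕ → E)) :
    Prop :=
  ∃ σ : List (Submodule 𝔽 E) → E,
    ∀ Y : ℕ → Submodule 𝔽 E,
      (∀ i, Y i ≤ X ∧ ¬FiniteDimensional 𝔽 ↥(Y i)) →
      (∀ i, σ (hist Y (i + 1)) ∈ Y i ∧ σ (hist Y (i + 1)) ≠ 0 ∧
          VecLt b (σ (hist Y (i + 1))) (σ (hist Y (i + 2)))) ∧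
        prefCat pre (fun i => σ (hist Y (i + 1))) ∈ A

/-- Player I has a strategy in the infinite asymptotic game `F_X(pre)` below `X` to play
in `A`: player I plays strictly increasing natural numbers `n i`, player II answers with
nonzero vectors of `X` with `n i < x i` forming a block sequence, and the outcome
(the prefix `pre` followed by II's vectors) lies in `A`. -/
def IWinsF (b : Module.Basis ℕ 𝔽 E) (X : Submodule 𝔽 E) (pre : List E) (A : Set (ℕ → E)) :
    Prop :=
  ∃ σ : List E → ℕ,
    ∀ x : ℕ → E,
      (∀ i, x i ∈ X ∧ x i ≠ 0 ∧ NatLt b (σ (hist x i)) (x i) ∧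
          VecLt b (x i) (x (i + 1))) →
      (∀ i, σ (hist x i) < σ (hist x (i + 1))) ∧ prefCat pre x ∈ A

/-- A set `A ⊆ E^∞` is strategically Ramsey if for every block subspace `V` and every
finite block sequence `z`, there is a block subspace `W ≤ V` such that either II has a
strategy in `G_W(z)` to play in `A`, or I has a strategy in `F_W(z)` to play in `Aᶜ`. -/
def StrategicallyRamsey (b : Module.Basis ℕ 𝔽 E) (A : Set (ℕ → E)) : Prop :=
  ∀ V : Submodule 𝔽 E, IsBlockSubspace b V → ∀ z : List E, IsFinBlockSeq b z →
    ∃ W : Submodule 𝔽 E, W ≤ V ∧ IsBlockSubspace b W ∧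
      (IIWinsG b W z A ∨ IWinsF b W z Aᶜ)

end Defs

/-!
Three fusion arguments. First, a block subspace `Z₁ ≤ X` decides, for every pair `(p, n)`,
whether I can defeat `A n` after `xs ++ p` below some block subspace; call `(z₀, …, zₙ)` good
when I cannot do so anywhere below `Z₁`. The positions from which II can force Gowers' game
into a good position form an inductively defined set, and a second fusion gives `S ≤ Z₁` below
which membership no longer depends on the block subspace. If the empty position is a member, II
wins (a). Otherwise every non-member has a tall subspace all of whose moves lead to non-members;
a third fusion merges these into `Z₂ ≤ S`, where I keeps every position a non-member, hence not
good, just by playing above a bound. Then after each `(z₀, …, zₙ)` I has a strategy defeating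
`A n`, and by playing above all strategies started so far I defeats every `A n` at once (b).
-/
noncomputable section

open Submodule Set

variable {𝔽 : Type} [Field 𝔽] {E : Type} [AddCommGroup E] [Module 𝔽 E] {b : Module.Basis ℕ 𝔽 E}

variable (b) in
def suppMax (x : E) : ℕ := (supp b x).sup id

lemma le_suppMax {x : E} {m : ℕ} (hm : m ∈ supp b x) : m ≤ suppMax b x :=
  Finset.le_sup (f := id) hm

lemma supp_nonempty {x : E} (hx : x ≠ 0) : (supp b x).Nonempty :=
  Finsupp.support_nonempty_iff.2 (b.repr.map_ne_zero_iff.2 hx)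

lemma vecLt_of_natLt_suppMax {x y : E} (h : NatLt b (suppMax b x) y) : VecLt b x y :=
  fun _ hm n hn => (le_suppMax hm).trans_lt (h n hn)

lemma NatLt.mono {m n : ℕ} {x : E} (hmn : m ≤ n) (h : NatLt b n x) : NatLt b m x :=
  fun a ha => hmn.trans_lt (h a ha)

lemma VecLt.trans {x y z : E} (hy : y ≠ 0) (hxy : VecLt b x y) (hyz : VecLt b y z) :
    VecLt b x z := by
  obtain ⟨m, hm⟩ := supp_nonempty (b := b) hy
  exact fun a ha c hc => (hxy a ha m hm).trans (hyz m hm c hc)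

variable (b) in
def above (N : ℕ) : Submodule 𝔽 E :=
  (Finsupp.supported 𝔽 𝔽 (Ioi N)).comap (b.repr : E →ₗ[𝔽] ℕ →₀ 𝔽)

lemma mem_above {N : ℕ} {x : E} : x ∈ above b N ↔ NatLt b N x :=
  Finsupp.mem_supported 𝔽 _

variable (b) in
def Tall (U : Submodule 𝔽 E) : Prop := ∀ N, ∃ y ∈ U, y ≠ 0 ∧ NatLt b N y

lemma Tall.inf_above {U : Submodule 𝔽 E} (hU : Tall b U) (N : ℕ) : Tall b (U ⊓ above b N) := by
  intro M
  obtain ⟨y, hyU, hy0, hy⟩ := hU (max N M)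
  exact ⟨y, ⟨hyU, mem_above.2 (hy.mono (le_max_left _ _))⟩, hy0, hy.mono (le_max_right _ _)⟩

lemma Tall.of_not_finiteDimensional {U : Submodule 𝔽 E} (hU : ¬FiniteDimensional 𝔽 U) :
    Tall b U := by
  intro N
  let φ : U →ₗ[𝔽] Fin (N + 1) → 𝔽 :=
    LinearMap.pi fun i => Finsupp.lapply (i : ℕ) ∘ₗ b.repr.toLinearMap ∘ₗ U.subtype
  obtain ⟨u, hu, hu0⟩ : ∃ u ∈ LinearMap.ker φ, u ≠ 0 := by
    by_contra! h
    exact hU (FiniteDimensional.of_injective φ ((injective_iff_map_eq_zero φ).2 h))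
  refine ⟨u, u.2, by simpa using hu0, fun m hm => ?_⟩
  by_contra! hmN
  exact Finsupp.mem_support_iff.1 hm (congr_fun hu ⟨m, by omega⟩)

lemma IsBlockSeq.vecLt_of_lt {z : ℕ → E} (hz : IsBlockSeq b z) {i j : ℕ} (hij : i < j) :
    VecLt b (z i) (z j) := by
  induction j, hij using Nat.le_induction with
  | base => exact hz.2 i
  | succ j _ ih => exact ih.trans (hz.1 j) (hz.2 j)

lemma IsBlockSeq.le_of_mem_supp {z : ℕ → E} (hz : IsBlockSeq b z) (j : ℕ) :
    ∀ m ∈ supp b (z j), j ≤ m := by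
  induction j with
  | zero => exact fun m _ => m.zero_le
  | succ j ih =>
    obtain ⟨a, ha⟩ := supp_nonempty (b := b) (hz.1 j)
    exact fun m hm => (ih a ha).trans_lt (hz.2 j a ha m hm)

lemma IsBlockSubspace.tall {X : Submodule 𝔽 E} (hX : IsBlockSubspace b X) : Tall b X := by
  obtain ⟨z, hz, rfl⟩ := hX
  exact fun N => ⟨z (N + 1), subset_span ⟨N + 1, rfl⟩, hz.1 _,
    fun m hm => Nat.lt_of_succ_le (hz.le_of_mem_supp _ m hm)⟩

lemma exists_isBlockSeq_forall_mem {V : ℕ → Submodule 𝔽 E} (hV : ∀ k, Tall b (V k)) :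
    ∃ z : ℕ → E, IsBlockSeq b z ∧ ∀ k, z k ∈ V k := by
  choose w hwV hw0 hwN using hV
  let z : ℕ → E := fun k => Nat.rec (w 0 0) (fun k zk => w (k + 1) (suppMax b zk)) k
  refine ⟨z, ⟨fun k => ?_, fun k => vecLt_of_natLt_suppMax (hwN _ _)⟩, fun k => ?_⟩
  · cases k <;> exact hw0 _ _
  · cases k <;> exact hwV _ _

lemma Tall.exists_isBlockSubspace_le {U : Submodule 𝔽 E} (hU : Tall b U) :
    ∃ W, IsBlockSubspace b W ∧ W ≤ U := by
  obtain ⟨z, hz, hzU⟩ := exists_isBlockSeq_forall_mem fun _ => hU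
  exact ⟨_, ⟨z, hz, rfl⟩, span_le.2 (range_subset_iff.2 hzU)⟩

lemma IsBlockSeq.notMem_supp_of_ne {z : ℕ → E} (hz : IsBlockSeq b z) {i j m : ℕ} (hij : i ≠ j)
    (hm : m ∈ supp b (z j)) : m ∉ supp b (z i) := fun hm' => by
  rcases hij.lt_or_gt with h | h
  · exact (hz.vecLt_of_lt h m hm' m hm).false
  · exact (hz.vecLt_of_lt h m hm m hm').false

lemma IsBlockSeq.repr_sum_apply {z : ℕ → E} (hz : IsBlockSeq b z) (c : ℕ →₀ 𝔽) {j m : ℕ}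
    (hm : m ∈ supp b (z j)) : b.repr (c.sum fun i a => a • z i) m = c j * b.repr (z j) m := by
  simp only [Finsupp.sum, map_sum, map_smul, Finsupp.coe_finsetSum, Finset.sum_apply,
    Finsupp.smul_apply, smul_eq_mul]
  refine Finset.sum_eq_single j (fun i _ hij => ?_)
    (fun hj => by simp [Finsupp.notMem_support_iff.1 hj])
  rw [Finsupp.notMem_support_iff.1 (hz.notMem_supp_of_ne hij hm), mul_zero]

lemma IsBlockSeq.span_inf_above_le {z : ℕ → E} (hz : IsBlockSeq b z) (N : ℕ) :
    span 𝔽 (range z) ⊓ above b N ≤ span 𝔽 (z '' {j | NatLt b N (z j)}) := by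
  rintro x ⟨hx, hxN⟩
  obtain ⟨c, rfl⟩ := Finsupp.mem_span_range_iff_exists_finsupp.1 hx
  refine sum_mem fun j hj => smul_mem _ _ (subset_span ⟨j, fun m hm => ?_, rfl⟩)
  refine mem_above.1 hxN m (Finsupp.mem_support_iff.2 ?_)
  rw [hz.repr_sum_apply c hm]
  exact mul_ne_zero (Finsupp.mem_support_iff.1 hj) (Finsupp.mem_support_iff.1 hm)

lemma IsBlockSeq.span_inf_above_suppMax_le {z : ℕ → E} (hz : IsBlockSeq b z) (k : ℕ) :
    span 𝔽 (range z) ⊓ above b (suppMax b (z k)) ≤ span 𝔽 (z '' Ioi k) := by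
  refine (hz.span_inf_above_le _).trans (span_mono (image_mono fun j hj => ?_))
  by_contra hjk
  rw [mem_Ioi, not_lt] at hjk
  obtain ⟨a, ha⟩ := supp_nonempty (b := b) (hz.1 j)
  refine (hj a ha).not_ge ?_
  rcases hjk.lt_or_eq with hjk | rfl
  · obtain ⟨c, hc⟩ := supp_nonempty (b := b) (hz.1 k)
    exact (hz.vecLt_of_lt hjk a ha c hc).le.trans (le_suppMax hc)
  · exact le_suppMax ha

/-- Fusion: one block subspace decides countably many downward closed properties, up to a tail. -/
theorem exists_fusion_nat (Q : ℕ → Submodule 𝔽 E → Prop) (hQ : ∀ k, Antitone (Q k))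
    {X : Submodule 𝔽 E} (hX : IsBlockSubspace b X) :
    ∃ Z ≤ X, IsBlockSubspace b Z ∧ ∃ N : ℕ → ℕ, ∀ k,
      (∀ V, IsBlockSubspace b V → V ≤ Z → ¬Q k V) ∨ Q k (Z ⊓ above b (N k)) := by
  have hstep : ∀ k (V : Submodule 𝔽 E), ∃ W ≤ V, (IsBlockSubspace b V → IsBlockSubspace b W) ∧
      ((∀ W', IsBlockSubspace b W' → W' ≤ V → ¬Q k W') ∨ Q k W) := by
    intro k V
    by_cases h : ∃ W, IsBlockSubspace b W ∧ W ≤ V ∧ Q k W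
    · obtain ⟨W, hW, hWV, hQW⟩ := h
      exact ⟨W, hWV, fun _ => hW, Or.inr hQW⟩
    · exact ⟨V, le_rfl, id, Or.inl fun W hW hWV hQW => h ⟨W, hW, hWV, hQW⟩⟩
  choose next hnext_le hnext_block hnext using hstep
  let V : ℕ → Submodule 𝔽 E := fun k => Nat.rec X next k
  have hV : Antitone V := antitone_nat_of_succ_le fun k => hnext_le k (V k)
  have hV_block : ∀ k, IsBlockSubspace b (V k) := fun k =>
    Nat.rec hX (fun k h => hnext_block k _ h) k
  obtain ⟨z, hz, hzV⟩ := exists_isBlockSeq_forall_mem fun k => (hV_block k).tall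
  refine ⟨span 𝔽 (range z), span_le.2 (range_subset_iff.2 fun k => hV k.zero_le (hzV k)),
    ⟨z, hz, rfl⟩, fun k => suppMax b (z k), fun k => ?_⟩
  have htail : span 𝔽 (range z) ⊓ above b (suppMax b (z k)) ≤ V (k + 1) :=
    (hz.span_inf_above_suppMax_le k).trans
      (span_le.2 (image_subset_iff.2 fun j hj => hV (Nat.succ_le_of_lt hj) (hzV j)))
  refine (hnext k (V k)).imp (fun hno W hW hWZ hQW => ?_) (hQ k htail)
  obtain ⟨W', hW', hW'W⟩ := (hW.tall.inf_above (suppMax b (z k))).exists_isBlockSubspace_le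
  exact hno W' hW' ((hW'W.trans (inf_le_inf_right _ hWZ)).trans (htail.trans (hV k.le_succ)))
    (hQ k (hW'W.trans inf_le_left) hQW)

theorem exists_fusion {ι : Type*} [Countable ι] (Q : ι → Submodule 𝔽 E → Prop)
    (hQ : ∀ i, Antitone (Q i)) {X : Submodule 𝔽 E} (hX : IsBlockSubspace b X) :
    ∃ Z ≤ X, IsBlockSubspace b Z ∧ ∃ N : ι → ℕ, ∀ i,
      (∀ V, IsBlockSubspace b V → V ≤ Z → ¬Q i V) ∨ Q i (Z ⊓ above b (N i)) := by
  obtain ⟨f, hf⟩ := exists_injective_nat ι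
  obtain ⟨Z, hZX, hZ, N, hN⟩ := exists_fusion_nat (fun k V => ∀ i, f i = k → Q i V)
    (fun k _ _ hVW h i hi => hQ i hVW (h i hi)) hX
  exact ⟨Z, hZX, hZ, N ∘ f, fun i => (hN (f i)).imp
    (fun h V hV hVZ hQV => h V hV hVZ fun _ hi' => hf hi' ▸ hQV) (fun h => h i rfl)⟩

theorem exists_decisive {ι : Type*} [Countable ι] (Q : ι → Submodule 𝔽 E → Prop)
    (hQ : ∀ i, Antitone (Q i)) (hQ_above : ∀ i N V, Q i (V ⊓ above b N) → Q i V)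
    {X : Submodule 𝔽 E} (hX : IsBlockSubspace b X) :
    ∃ Z ≤ X, IsBlockSubspace b Z ∧ ∀ i,
      (∀ V, IsBlockSubspace b V → V ≤ Z → ¬Q i V) ∨ Q i Z := by
  obtain ⟨Z, hZX, hZ, N, hN⟩ := exists_fusion Q hQ hX
  exact ⟨Z, hZX, hZ, fun i => (hN i).imp_right (hQ_above i _ _)⟩

section Lists

variable {α : Type*}

@[simp] lemma length_hist (x : ℕ → α) (n : ℕ) : (hist x n).length = n := List.length_ofFn

lemma hist_add (x : ℕ → α) (m k : ℕ) :
    hist x (m + k) = hist x m ++ hist (fun i => x (m + i)) k := by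
  simp [hist, List.ofFn_add]

lemma hist_succ (x : ℕ → α) (n : ℕ) : hist x (n + 1) = hist x n ++ [x n] := by
  rw [hist_add]
  simp [hist]

lemma hist_succ' (x : ℕ → α) (n : ℕ) : hist x (n + 1) = x 0 :: hist (fun i => x (i + 1)) n :=
  List.ofFn_succ

lemma getLast?_hist_succ (x : ℕ → α) (n : ℕ) : (hist x (n + 1)).getLast? = some (x n) := by
  simp [hist_succ]

lemma take_hist (x : ℕ → α) {m n : ℕ} (h : m ≤ n) : (hist x n).take m = hist x m := by
  obtain ⟨k, rfl⟩ := Nat.exists_eq_add_of_le h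
  rw [hist_add, List.take_left' (length_hist x m)]

lemma prefCat_nil (x : ℕ → α) : prefCat [] x = x := by
  funext n
  simp [prefCat]

lemma prefCat_append_hist (p : List α) (x : ℕ → α) (m : ℕ) :
    prefCat (p ++ hist x m) (fun i => x (m + i)) = prefCat p x := by
  funext n
  simp only [prefCat, List.length_append, length_hist, List.get_eq_getElem]
  by_cases h₁ : n < p.length
  · rw [dif_pos (by omega), dif_pos h₁, List.getElem_append_left h₁]
  by_cases h₂ : n < p.length + m
  · rw [dif_pos h₂, dif_neg h₁, List.getElem_append_right (by omega)]
    simp [hist]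
  · rw [dif_neg h₂, dif_neg h₁]
    congr 1
    omega

def strictMajorant (g : List α → ℕ) (l : List α) : ℕ :=
  ∑ k ∈ Finset.range (l.length + 1), (g (l.take k) + 1)

lemma le_strictMajorant (g : List α → ℕ) (l : List α) : g l ≤ strictMajorant g l := by
  refine le_trans ?_ (Finset.single_le_sum (fun _ _ => Nat.zero_le _)
    (Finset.self_mem_range_succ l.length))
  simp

lemma strictMajorant_hist_lt (g : List α → ℕ) (x : ℕ → α) (i : ℕ) :
    strictMajorant g (hist x i) < strictMajorant g (hist x (i + 1)) := by
  have hsum : ∑ k ∈ Finset.range (i + 1), (g ((hist x (i + 1)).take k) + 1) =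
      strictMajorant g (hist x i) := by
    rw [strictMajorant, length_hist]
    refine Finset.sum_congr rfl fun k hk => ?_
    have hk : k ≤ i := Nat.lt_succ_iff.1 (Finset.mem_range.1 hk)
    rw [take_hist x hk, take_hist x (hk.trans i.le_succ)]
  conv_rhs => rw [strictMajorant, length_hist, Finset.sum_range_succ, hsum]
  omega

lemma le_sum_take_drop_hist (ρ : List α → ℕ → List α → ℕ) (x : ℕ → α) (n i : ℕ) :
    ρ (hist x (n + 1)) n (hist (fun r => x (n + 1 + r)) i) ≤
      ∑ j ∈ Finset.range (hist x (n + 1 + i)).length,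
        ρ ((hist x (n + 1 + i)).take (j + 1)) j ((hist x (n + 1 + i)).drop (j + 1)) := by
  refine le_of_eq_of_le ?_ (Finset.single_le_sum (fun _ _ => Nat.zero_le _)
    (Finset.mem_range.2 (by simp; omega : n < (hist x (n + 1 + i)).length)))
  rw [hist_add x (n + 1) i, List.take_left' (length_hist x _), List.drop_left' (length_hist x _)]

end Lists

section Games

variable {D : List E → Prop} {V W : Submodule 𝔽 E} {t : List E}

variable (b) in
lemma antitone_iWinsF (pre : List E) (C : Set (ℕ → E)) : Antitone fun V => IWinsF b V pre C :=
  fun _ _ hVW ⟨σ, hσ⟩ => ⟨σ, fun x hx => hσ x fun i => ⟨hVW (hx i).1, (hx i).2⟩⟩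

lemma IWinsF.of_inf_above {pre : List E} {C : Set (ℕ → E)} {N : ℕ}
    (h : IWinsF b (V ⊓ above b N) pre C) : IWinsF b V pre C := by
  obtain ⟨σ, hσ⟩ := h
  refine ⟨fun l => N + σ l, fun x hx => ?_⟩
  obtain ⟨hlt, hC⟩ := hσ x fun i =>
    ⟨⟨(hx i).1, mem_above.2 ((hx i).2.2.1.mono (Nat.le_add_right _ _))⟩, (hx i).2.1,
      (hx i).2.2.1.mono (Nat.le_add_left _ _), (hx i).2.2.2⟩
  exact ⟨fun i => by simpa using hlt i, hC⟩

lemma IIWinsG.mono {pre : List E} {A B : Set (ℕ → E)} (h : IIWinsG b V pre A) (hAB : A ⊆ B) :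
    IIWinsG b V pre B :=
  let ⟨σ, hσ⟩ := h
  ⟨σ, fun Y hY => ⟨(hσ Y hY).1, hAB (hσ Y hY).2⟩⟩

variable (b) in
def IsLegalMove (U : Submodule 𝔽 E) (t : List E) (y : E) : Prop :=
  y ∈ U ∧ y ≠ 0 ∧ ∀ v ∈ t.getLast?, VecLt b v y

lemma IsLegalMove.mono {y : E} (hVW : V ≤ W) (h : IsLegalMove b V t y) : IsLegalMove b W t y :=
  ⟨hVW h.1, h.2⟩

/-- I plays above `N` and above every strategy started so far, one for each `C n`. -/
theorem iWinsF_compl_iUnion_of_invariant {Z : Submodule 𝔽 E} {pre : List E}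
    {C : ℕ → Set (ℕ → E)} (P : List E → Prop) (N : List E → ℕ) (hP₀ : P [])
    (hP : ∀ t y, P t → IsLegalMove b Z t y → NatLt b (N t) y → P (t ++ [y]))
    (hwin : ∀ t n, P t → t.length = n + 1 → IWinsF b Z (pre ++ t) (C n)ᶜ) :
    IWinsF b Z pre (⋃ n, C n)ᶜ := by
  classical
  let ρ : List E → ℕ → List E → ℕ := fun t n =>
    if h : IWinsF b Z (pre ++ t) (C n)ᶜ then h.choose else 0
  let g : List E → ℕ := fun l =>
    N l + ∑ j ∈ Finset.range l.length, ρ (l.take (j + 1)) j (l.drop (j + 1))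
  refine ⟨strictMajorant g, fun x hx => ⟨strictMajorant_hist_lt g x, ?_⟩⟩
  have hxg : ∀ i, NatLt b (g (hist x i)) (x i) := fun i =>
    (hx i).2.2.1.mono (le_strictMajorant g _)
  have hxP : ∀ i, P (hist x i) := by
    intro i
    induction i with
    | zero => exact hP₀
    | succ i ih =>
      refine hist_succ x i ▸ hP _ _ ih ⟨(hx i).1, (hx i).2.1, fun v hv => ?_⟩
        ((hxg i).mono (Nat.le_add_right _ _))
      cases i with
      | zero => simp [hist] at hv
      | succ i =>
        rw [getLast?_hist_succ, Option.mem_some_iff] at hv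
        exact hv ▸ (hx i).2.2.2
  simp only [mem_compl_iff, mem_iUnion, not_exists]
  intro n hn
  have hwin_n := hwin _ n (hxP (n + 1)) (length_hist x _)
  have hρ : ρ (hist x (n + 1)) n = hwin_n.choose := dif_pos hwin_n
  refine (hwin_n.choose_spec (fun i => x (n + 1 + i)) fun i => ⟨(hx _).1, (hx _).2.1, ?_,
    (hx _).2.2.2⟩).2 ((prefCat_append_hist pre x (n + 1)).symm ▸ hn)
  refine (hxg (n + 1 + i)).mono (le_trans ?_ (Nat.le_add_left _ _))
  rw [← hρ]
  exact le_sum_take_drop_hist ρ x n i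

variable (b) in
/-- The positions `t` from which II can force Gowers' game below `V` into `D` in finitely many
moves; `y U` is II's answer to I playing `U`. Being inductive, a derivation comes with a
well-founded rank, which is what lets the strategies below be glued together. -/
inductive Reaches (D : List E → Prop) (V : Submodule 𝔽 E) : List E → Prop
  | base {t : List E} : D t → Reaches D V t
  | step {t : List E} (y : Submodule 𝔽 E → E)
      (hy : ∀ U ≤ V, Tall b U → IsLegalMove b U t (y U))
      (hreach : ∀ U ≤ V, Tall b U → Reaches D V (t ++ [y U])) : Reaches D V t

lemma Reaches.anti (hWV : W ≤ V) (h : Reaches b D V t) : Reaches b D W t := by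
  induction h with
  | base h => exact .base h
  | step y hy _ ih =>
    exact .step y (fun U hU => hy U (hU.trans hWV)) (fun U hU => ih U (hU.trans hWV))

lemma Reaches.of_inf_above {N : ℕ} (h : Reaches b D (V ⊓ above b N) t) : Reaches b D V t := by
  induction h with
  | base h => exact .base h
  | step y hy _ ih =>
    exact .step (fun U => y (U ⊓ above b N))
      (fun U hU hT => (hy _ (inf_le_inf_right _ hU) (hT.inf_above N)).mono inf_le_left)
      (fun U hU hT => ih _ (inf_le_inf_right _ hU) (hT.inf_above N))

lemma exists_forall_not_reaches (h : ¬Reaches b D V t) :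
    ∃ U ≤ V, Tall b U ∧ ∀ y, IsLegalMove b U t y → ¬Reaches b D V (t ++ [y]) := by
  by_contra! h'
  choose! y hy hreach using h'
  exact h (.step y hy hreach)

/-- II's strategies are handled as rules `τ p U` answering I's subspace `U` at the position `p`;
unlike strategies reading I's past moves, they glue along II's first answer. -/
def playOut (τ : List E → Submodule 𝔽 E → E) (t : List E) (l : List (Submodule 𝔽 E)) :
    List E :=
  l.foldl (fun p U => p ++ [τ p U]) t

lemma playOut_append_singleton (τ : List E → Submodule 𝔽 E → E) (l : List (Submodule 𝔽 E))
    (U : Submodule 𝔽 E) : playOut τ t (l ++ [U]) = playOut τ t l ++ [τ (playOut τ t l) U] :=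
  List.foldl_append

lemma playOut_congr {τ τ' : List E → Submodule 𝔽 E → E} (l : List (Submodule 𝔽 E))
    (h : ∀ p, t <+: p → τ p = τ' p) : playOut τ t l = playOut τ' t l := by
  induction l generalizing t with
  | nil => rfl
  | cons U l ih =>
    simp only [playOut, List.foldl_cons]
    rw [h t (List.prefix_refl t)]
    exact ih fun p hp => h p ((List.prefix_append t _).trans hp)

variable (b) in
def IsLegalRule (V : Submodule 𝔽 E) (τ : List E → Submodule 𝔽 E → E) : Prop :=
  ∀ p, ∀ U ≤ V, Tall b U → IsLegalMove b U p (τ p U)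

variable (b) in
def RuleReaches (D : List E → Prop) (V : Submodule 𝔽 E) (τ : List E → Submodule 𝔽 E → E)
    (t : List E) : Prop :=
  ∀ Y : ℕ → Submodule 𝔽 E, (∀ i, Y i ≤ V ∧ Tall b (Y i)) → ∃ j, D (playOut τ t (hist Y j))

variable (b) in
lemma exists_isLegalRule (V : Submodule 𝔽 E) : ∃ τ, IsLegalRule b V τ := by
  have : ∀ (p : List E) (U : Submodule 𝔽 E), ∃ y, Tall b U → IsLegalMove b U p y := by
    intro p U
    by_cases hU : Tall b U
    · obtain ⟨y, hyU, hy0, hy⟩ := hU ((p.getLast?.map (suppMax b)).getD 0)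
      refine ⟨y, fun _ => ⟨hyU, hy0, fun v hv => vecLt_of_natLt_suppMax ?_⟩⟩
      simpa [Option.mem_def.1 hv] using hy
    · exact ⟨0, fun h => absurd h hU⟩
  choose τ hτ using this
  exact ⟨τ, fun p U _ hU => hτ p U hU⟩

/-- II answers by `y` first and then, after answering `w`, follows a rule reaching `D` from
`t ++ [w]`. -/
lemma exists_rule_of_step (y : Submodule 𝔽 E → E)
    (hy : ∀ U ≤ V, Tall b U → IsLegalMove b U t (y U))
    (hreach : ∀ U ≤ V, Tall b U → ∃ τ, IsLegalRule b V τ ∧ RuleReaches b D V τ (t ++ [y U])) :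
    ∃ τ, IsLegalRule b V τ ∧ RuleReaches b D V τ t := by
  classical
  obtain ⟨τ₀, hτ₀⟩ := exists_isLegalRule b V
  have : ∀ w : E, ∃ τ, IsLegalRule b V τ ∧
      ((∃ τ', IsLegalRule b V τ' ∧ RuleReaches b D V τ' (t ++ [w])) →
        RuleReaches b D V τ (t ++ [w])) := by
    intro w
    by_cases h : ∃ τ', IsLegalRule b V τ' ∧ RuleReaches b D V τ' (t ++ [w])
    · obtain ⟨τ', hτ', hD⟩ := h
      exact ⟨τ', hτ', fun _ => hD⟩
    · exact ⟨τ₀, hτ₀, fun h' => absurd h' h⟩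
  choose σ hσ_legal hσ using this
  let τ : List E → Submodule 𝔽 E → E := fun p => if p = t then y else σ (p.getD t.length 0) p
  refine ⟨τ, fun p U hU hT => ?_, fun Y hY => ?_⟩
  · by_cases hp : p = t
    · rw [show τ p = y from if_pos hp, hp]
      exact hy U hU hT
    · rw [show τ p = σ _ p from if_neg hp]
      exact hσ_legal _ p U hU hT
  · obtain ⟨j, hj⟩ := hσ (y (Y 0)) (hreach _ (hY 0).1 (hY 0).2) (fun i => Y (i + 1))
      fun i => hY (i + 1)
    refine ⟨j + 1, ?_⟩
    have hτt : τ t = y := if_pos rfl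
    rw [hist_succ', playOut, List.foldl_cons, hτt, ← playOut]
    rwa [playOut_congr]
    intro p hp
    have hlen : t.length < p.length := by simpa using hp.length_le
    simp only [τ, if_neg (fun h => by simp [h] at hlen : p ≠ t)]
    obtain ⟨r, rfl⟩ := hp
    simp

lemma Reaches.exists_rule (h : Reaches b D V t) :
    ∃ τ, IsLegalRule b V τ ∧ RuleReaches b D V τ t := by
  induction h with
  | base h =>
    obtain ⟨τ, hτ⟩ := exists_isLegalRule b V
    exact ⟨τ, hτ, fun _ _ => ⟨0, h⟩⟩
  | step y hy _ ih => exact exists_rule_of_step y hy ih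

lemma iiWinsG_of_rule {τ : List E → Submodule 𝔽 E → E} (hτ : IsLegalRule b V τ)
    (hD : RuleReaches b D V τ []) : IIWinsG b V [] {z | ∃ j, D (hist z j)} := by
  refine ⟨fun l => (playOut τ [] l).getLastD 0, fun Y hY => ?_⟩
  have hT : ∀ i, Tall b (Y i) := fun i => .of_not_finiteDimensional (hY i).2
  set z : ℕ → E := fun i => (playOut τ [] (hist Y (i + 1))).getLastD 0
  have hz : ∀ i, z i = τ (playOut τ [] (hist Y i)) (Y i) := fun i => by
    simp only [z, hist_succ, playOut_append_singleton, List.getLastD_concat]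
  have hplay : ∀ i, playOut τ [] (hist Y i) = hist z i := by
    intro i
    induction i with
    | zero => rfl
    | succ i ih => rw [hist_succ, playOut_append_singleton, hist_succ, hz, ih]
  have hlegal : ∀ i, IsLegalMove b (Y i) (hist z i) (z i) := fun i => by
    rw [hz, hplay]
    exact hτ _ _ (hY i).1 (hT i)
  refine ⟨fun i => ⟨(hlegal i).1, (hlegal i).2.1, (hlegal (i + 1)).2.2 _ (getLast?_hist_succ z i)⟩,
    ?_⟩
  obtain ⟨j, hj⟩ := hD Y fun i => ⟨(hY i).1, hT i⟩
  rw [prefCat_nil]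
  exact ⟨j, hplay j ▸ hj⟩

lemma Reaches.iiWinsG (h : Reaches b D V []) : IIWinsG b V [] {z | ∃ j, D (hist z j)} :=
  let ⟨_, hτ, hD⟩ := h.exists_rule
  iiWinsG_of_rule hτ hD

/-- The tall subspaces given by `exists_forall_not_reaches` at all positions are fused into one. -/
theorem exists_forall_not_reaches_append [Countable E] {S : Submodule 𝔽 E}
    (hS : IsBlockSubspace b S)
    (hstab : ∀ t, (∀ V, IsBlockSubspace b V → V ≤ S → ¬Reaches b D V t) ∨ Reaches b D S t) :
    ∃ Z ≤ S, IsBlockSubspace b Z ∧ ∃ N : List E → ℕ, ∀ t y, ¬Reaches b D S t →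
      IsLegalMove b Z t y → NatLt b (N t) y → ¬Reaches b D S (t ++ [y]) := by
  obtain ⟨Z, hZS, hZ, N, hN⟩ := exists_fusion
    (fun t W => ∀ y, IsLegalMove b W t y → ¬Reaches b D S (t ++ [y]))
    (fun _ _ _ hWW' h y hy => h y (hy.mono hWW')) hS
  refine ⟨Z, hZS, hZ, N, fun t y ht hy hyN => ((hN t).resolve_left fun hno => ?_) y
    ⟨⟨hy.1, mem_above.2 hyN⟩, hy.2⟩⟩
  obtain ⟨U, hUZ, hU, hUy⟩ := exists_forall_not_reaches ((hstab t).resolve_right ht Z hZ hZS)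
  obtain ⟨V, hV, hVU⟩ := hU.exists_isBlockSubspace_le
  exact hno V hV (hVU.trans hUZ) fun y hy hreach => hUy y (hy.mono hVU) (hreach.anti hZS)

end Games

end

theorem countable_union_split_general
    {𝔽 : Type} [Field 𝔽] [Countable 𝔽]
    {E : Type} [AddCommGroup E] [Module 𝔽 E]
    (b : Module.Basis ℕ 𝔽 E) (A : ℕ → Set (ℕ → E))
    (xs : List E)
    (X : Submodule 𝔽 E) (hX : IsBlockSubspace b X) :
    ∃ Z : Submodule 𝔽 E, Z ≤ X ∧ IsBlockSubspace b Z ∧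
      (IIWinsG b Z []
          {z : ℕ → E | ∃ n : ℕ, ∀ V : Submodule 𝔽 E, IsBlockSubspace b V → V ≤ Z →
            ¬IWinsF b V (xs ++ hist z (n + 1)) (A n)ᶜ} ∨
        IWinsF b Z xs (⋃ n, A n)ᶜ) := by
  have : Countable E := b.repr.toEquiv.countable_iff.2 inferInstance
  obtain ⟨Z₁, hZ₁X, hZ₁, hdec⟩ := exists_decisive
    (fun (q : List E × ℕ) V => IWinsF b V (xs ++ q.1) (A q.2)ᶜ)
    (fun _ => antitone_iWinsF b _ _) (fun _ _ _ => IWinsF.of_inf_above) hX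
  let D : List E → Prop := fun t => ∃ n, t.length = n + 1 ∧
    ∀ V, IsBlockSubspace b V → V ≤ Z₁ → ¬IWinsF b V (xs ++ t) (A n)ᶜ
  obtain ⟨S, hSZ₁, hS, hstab⟩ := exists_decisive (fun t V => Reaches b D V t)
    (fun _ _ _ => Reaches.anti) (fun _ _ _ => Reaches.of_inf_above) hZ₁
  by_cases hreach : Reaches b D S []
  · refine ⟨S, hSZ₁.trans hZ₁X, hS, Or.inl (hreach.iiWinsG.mono ?_)⟩
    rintro z ⟨j, n, hn, hgood⟩
    rw [length_hist] at hn
    subst hn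
    exact ⟨n, fun V hV hVS => hgood V hV (hVS.trans hSZ₁)⟩
  obtain ⟨Z₂, hZ₂S, hZ₂, N, hN⟩ := exists_forall_not_reaches_append hS hstab
  refine ⟨Z₂, hZ₂S.trans (hSZ₁.trans hZ₁X), hZ₂, Or.inr ?_⟩
  refine iWinsF_compl_iUnion_of_invariant (fun t => ¬Reaches b D S t) N hreach hN
    fun t n ht hlen => ?_
  refine antitone_iWinsF b _ _ (hZ₂S.trans hSZ₁) ((hdec (t, n)).resolve_left fun hgood => ?_)
  exact ht (.base ⟨n, hlen, hgood⟩)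

theorem countable_union_split
    {𝔽 : Type} [Field 𝔽] [Countable 𝔽]
    {E : Type} [AddCommGroup E] [Module 𝔽 E]
    (b : Module.Basis ℕ 𝔽 E) (A : ℕ → Set (ℕ → E))
    (xs : List E) (hxs : IsFinBlockSeq b xs)
    (X : Submodule 𝔽 E) (hX : IsBlockSubspace b X) :
    ∃ Z : Submodule 𝔽 E, Z ≤ X ∧ IsBlockSubspace b Z ∧
      (IIWinsG b Z []
          {z : ℕ → E | ∃ n : ℕ, ∀ V : Submodule 𝔽 E, IsBlockSubspace b V → V ≤ Z →
            ¬IWinsF b V (xs ++ hist z (n + 1)) (A n)ᶜ} ∨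
        IWinsF b Z xs (⋃ n, A n)ᶜ) :=
  countable_union_split_general b A xs X hX
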